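/- Let F₀ ∈ ℂ with F₀ ≠ −1, let Q : ℂ → ℂ be analytic in a neighborhood of F₀, and let x, t ∈ ℝ satisfy Q(F₀) = x·(F₀+1) − t·F₀ and a := Q'(F₀) − x + t ≠ 0. Then there exist δ > 0 and C > 0 such that for every α ∈ ℝ with |α − 1| ≤ δ and every F' ∈ ℂ with α⁻¹F' ≠ −1 and |α⁻¹F' − F₀| ≤ δ satisfying ((F'+1)/(α⁻¹F'+1))·Q(α⁻¹F') = x·(F'+1) − t·F', writing F̃ = α⁻¹F' one has |F̃ − F₀ − (1 − α)·t·F₀/((F₀+1)·a)| ≤ (C/|a|)·(|α − 1|·|F̃ − F₀| + |F̃ − F₀|²). -/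

import Mathlib

open Asymptotics

lemma taylor2 {Q : ℂ → ℂ} {F₀ : ℂ} (hQ : AnalyticAt ℂ Q F₀) :
    ∃ M > 0, ∃ δ > 0, ∀ z : ℂ, ‖z - F₀‖ ≤ δ →
      ‖Q z - Q F₀ - deriv Q F₀ * (z - F₀)‖ ≤ M * ‖z - F₀‖ ^ 2 := by
  obtain ⟨p, hp⟩ := hQ
  obtain ⟨c, hc0, hc⟩ := (hp.isBigO_sub_partialSum_pow 2).exists_pos
  rw [IsBigOWith, Metric.eventually_nhds_iff] at hc
  obtain ⟨δ, hδ, hc⟩ := hc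
  have hps : ∀ y : ℂ, p.partialSum 2 y = Q F₀ + deriv Q F₀ * y := by
    intro y
    have h0 : (p 0 fun _ => y) = Q F₀ := hp.coeff_zero _
    have h1 : (p 1 fun _ => y) = deriv Q F₀ * y := by
      have hd : deriv Q F₀ = p.coeff 1 := by rw [hp.deriv]; rfl
      rw [FormalMultilinearSeries.apply_eq_pow_smul_coeff, hd]
      simp [mul_comm]
    rw [FormalMultilinearSeries.partialSum, Finset.sum_range_succ, Finset.sum_range_one, h0, h1]
  refine ⟨c, hc0, δ/2, by positivity, fun z hz => ?_⟩
  have := hc (y := z - F₀) (by simpa [dist_eq_norm] using lt_of_le_of_lt hz (by linarith))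
  rw [hps] at this
  simp only [add_sub_cancel] at this
  calc ‖Q z - Q F₀ - deriv Q F₀ * (z - F₀)‖
      = ‖Q z - (Q F₀ + deriv Q F₀ * (z - F₀))‖ := by congr 1; ring
    _ ≤ c * ‖‖z - F₀‖ ^ 2‖ := this
    _ = c * ‖z - F₀‖ ^ 2 := by rw [norm_pow, norm_norm]

set_option maxHeartbeats 1000000 in
/-- Leading-order displacement of the rescaled solution `F̃ = α⁻¹ F'` of the deformed
equation from the solution `F₀` of the undeformed equation, with explicit quadratic
error (analytic core of Lemma 7.2). -/
theorem stmt_7 (F₀ : ℂ) (hF₀ : F₀ ≠ -1) (Q : ℂ → ℂ) (hQ : AnalyticAt ℂ Q F₀) (x t : ℝ)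
    (h : Q F₀ = (x : ℂ) * (F₀ + 1) - (t : ℂ) * F₀)
    (ha : deriv Q F₀ - (x : ℂ) + (t : ℂ) ≠ 0) :
    ∃ δ > 0, ∃ C > 0, ∀ α : ℝ, |α - 1| ≤ δ → ∀ F' : ℂ,
      ((α : ℂ))⁻¹ * F' ≠ -1 → ‖(α : ℂ)⁻¹ * F' - F₀‖ ≤ δ →
      ((F' + 1) / ((α : ℂ)⁻¹ * F' + 1)) * Q ((α : ℂ)⁻¹ * F')
        = (x : ℂ) * (F' + 1) - (t : ℂ) * F' →
      ‖(α : ℂ)⁻¹ * F' - F₀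
          - (1 - (α : ℂ)) * (t : ℂ) * F₀
            / ((F₀ + 1) * (deriv Q F₀ - (x : ℂ) + (t : ℂ)))‖
        ≤ (C / ‖deriv Q F₀ - (x : ℂ) + (t : ℂ)‖)
            * (|α - 1| * ‖(α : ℂ)⁻¹ * F' - F₀‖ + ‖(α : ℂ)⁻¹ * F' - F₀‖ ^ 2) := by
  obtain ⟨M, hM, δ₁, hδ₁, hT⟩ := taylor2 hQ
  set a : ℂ := deriv Q F₀ - (x : ℂ) + (t : ℂ) with ha_def
  have hD : (F₀ + 1) ≠ 0 := fun h0 => hF₀ (by linear_combination h0)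
  have hdpos : (0:ℝ) < ‖F₀ + 1‖ := norm_pos_iff.2 hD
  have hapos : (0:ℝ) < ‖a‖ := norm_pos_iff.2 ha
  set d : ℝ := ‖F₀ + 1‖ with hd_def
  set δ : ℝ := min δ₁ (min (1/2) (d / (4 + 2 * ‖F₀‖))) with hδ_def
  have hδpos : 0 < δ :=
    lt_min hδ₁ (lt_min (by norm_num) (div_pos hdpos (by positivity)))
  refine ⟨δ, hδpos, ‖F₀‖ * (‖a‖ + M) / d + |t| * 2 / d ^ 2 + M + 1, by positivity, ?_⟩
  intro α hα F' hne hclose heq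
  set G : ℂ := (α : ℂ)⁻¹ * F' with hG_def
  set u : ℂ := G - F₀ with hu_def
  set ε : ℂ := (α : ℂ) - 1 with hε_def
  have hδhalf : δ ≤ 1/2 := le_trans (min_le_right _ _) (min_le_left _ _)
  have hδd : δ ≤ d / (4 + 2 * ‖F₀‖) := le_trans (min_le_right _ _) (min_le_right _ _)
  have hδδ₁ : δ ≤ δ₁ := min_le_left _ _
  have hαpos : (0:ℝ) < α := by
    have := abs_le.1 (le_trans hα hδhalf)
    linarith [this.1]
  have hαne : (α : ℂ) ≠ 0 := by exact_mod_cast ne_of_gt hαpos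
  have hF' : F' = (α : ℂ) * G := by rw [hG_def]; field_simp
  have hεnorm : ‖ε‖ = |α - 1| := by
    rw [hε_def, show (α : ℂ) - 1 = ((α - 1 : ℝ) : ℂ) by push_cast; ring,
      Complex.norm_real, Real.norm_eq_abs]
  have hεδ : ‖ε‖ ≤ δ := by rw [hεnorm]; exact hα
  have huδ : ‖u‖ ≤ δ := hclose
  have hu1 : ‖u‖ ≤ 1 := le_trans huδ (by linarith)
  set R : ℂ := Q G - Q F₀ - deriv Q F₀ * u with hR_def
  have hRbound : ‖R‖ ≤ M * ‖u‖ ^ 2 := hT G (le_trans huδ hδδ₁)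
  have hGne : G + 1 ≠ 0 := fun h0 => hne (by linear_combination h0)
  rw [div_mul_eq_mul_div, div_eq_iff hGne, hF'] at heq
  have hkey : (a * u + R) * ((α : ℂ) * G + 1) = -ε * (t : ℂ) * G := by
    have hPR : Q G - (x : ℂ) * (G + 1) + (t : ℂ) * G = a * u + R := by
      rw [hR_def, ha_def, hu_def]; linear_combination h
    linear_combination heq - ((α : ℂ) * G + 1) * hPR
  set W : ℂ := (α : ℂ) * G + 1 with hW_def
  have hGu : G = F₀ + u := by rw [hu_def]; ring
  rw [hGu] at hkey
  have hδd' : δ * (4 + 2 * ‖F₀‖) ≤ d := by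
    rw [le_div_iff₀ (by positivity)] at hδd; exact hδd
  have hWclose : ‖W - (F₀ + 1)‖ ≤ d / 2 := by
    have e : W - (F₀ + 1) = u + ε * F₀ + ε * u := by
      rw [hW_def, hε_def, hGu]; ring
    rw [e]
    have h1 : ‖u + ε * F₀ + ε * u‖ ≤ ‖u‖ + ‖ε‖ * ‖F₀‖ + ‖ε‖ * ‖u‖ := by
      calc ‖u + ε * F₀ + ε * u‖ ≤ ‖u + ε * F₀‖ + ‖ε * u‖ := norm_add_le _ _
        _ ≤ ‖u‖ + ‖ε * F₀‖ + ‖ε * u‖ := by linarith [norm_add_le u (ε * F₀)]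
        _ = ‖u‖ + ‖ε‖ * ‖F₀‖ + ‖ε‖ * ‖u‖ := by rw [norm_mul, norm_mul]
    have h2 : ‖ε‖ * ‖F₀‖ ≤ δ * ‖F₀‖ :=
      mul_le_mul_of_nonneg_right hεδ (norm_nonneg _)
    have h3 : ‖ε‖ * ‖u‖ ≤ δ * 1 :=
      mul_le_mul hεδ hu1 (norm_nonneg _) hδpos.le
    nlinarith [norm_nonneg F₀]
  have hWlow : d / 2 ≤ ‖W‖ := by
    rw [norm_sub_rev] at hWclose
    have := norm_sub_norm_le (F₀ + 1) W
    rw [← hd_def] at this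
    linarith
  have hWne : W ≠ 0 := by
    intro h0; rw [h0, norm_zero] at hWlow; linarith
  clear_value a G u ε R W
  have hWu : W = F₀ + 1 + u + ε * (F₀ + u) := by
    rw [hW_def, hε_def, hGu]; ring
  have haDW : a * (F₀ + 1) * W ≠ 0 := mul_ne_zero (mul_ne_zero ha hD) hWne
  have hE : u - (1 - (α : ℂ)) * (t : ℂ) * F₀ / ((F₀ + 1) * a)
      = -(ε * F₀ * (a * u + R)) / (a * (F₀ + 1)) - ε * (t : ℂ) * u / (a * (F₀ + 1) * W)
        - R / a := by
    have hE' : u - (1 - (α : ℂ)) * (t : ℂ) * F₀ / ((F₀ + 1) * a)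
        = (-(ε * F₀ * (a * u + R)) * W - ε * (t : ℂ) * u - R * (F₀ + 1) * W)
          / (a * (F₀ + 1) * W) := by
      rw [eq_div_iff haDW, sub_mul, div_mul_eq_mul_div,
        show (1 - (α : ℂ)) * (t : ℂ) * F₀ * (a * (F₀ + 1) * W) / ((F₀ + 1) * a)
          = (1 - (α : ℂ)) * (t : ℂ) * F₀ * W * (((F₀ + 1) * a) / ((F₀ + 1) * a)) by ring,
        div_self (mul_ne_zero hD ha), mul_one,
        show (1 : ℂ) - (α : ℂ) = -ε by rw [hε_def]; ring]
      linear_combination ((F₀ + 1) + ε * F₀) * hkey + ε * (t : ℂ) * F₀ * hWu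
    rw [hE']
    field_simp
  rw [hE]
  -- set up real quantities
  set A : ℝ := ‖a‖ with hA_def
  set e : ℝ := |α - 1| with he_def
  set n : ℝ := ‖u‖ with hn_def
  clear_value d δ A e n
  have he0 : 0 ≤ e := by rw [he_def]; positivity
  have hn0 : 0 ≤ n := by rw [hn_def]; positivity
  have hauR : ‖a * u + R‖ ≤ (A + M) * n := by
    calc ‖a * u + R‖ ≤ ‖a * u‖ + ‖R‖ := norm_add_le _ _
      _ = A * n + ‖R‖ := by rw [norm_mul, ← hA_def, ← hn_def]
      _ ≤ A * n + M * n ^ 2 := by linarith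
      _ ≤ (A + M) * n := by
          nlinarith [mul_nonneg (mul_nonneg hM.le hn0) (sub_nonneg.2 hu1)]
  have hB1 : ‖-(ε * F₀ * (a * u + R)) / (a * (F₀ + 1))‖
      ≤ ‖F₀‖ * (A + M) / d * (e * n) / A := by
    rw [norm_div, norm_neg, norm_mul, norm_mul, norm_mul, hεnorm, ← hA_def, ← hd_def,
      show ‖F₀‖ * (A + M) / d * (e * n) / A = ‖F₀‖ * (A + M) * (e * n) / (A * d) by ring,
      div_le_div_iff₀ (mul_pos hapos hdpos) (mul_pos hapos hdpos)]
    have h1 : e * ‖F₀‖ * ‖a * u + R‖ ≤ ‖F₀‖ * (A + M) * (e * n) := by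
      calc e * ‖F₀‖ * ‖a * u + R‖ ≤ e * ‖F₀‖ * ((A + M) * n) := by
            refine mul_le_mul_of_nonneg_left hauR ?_
            exact mul_nonneg he0 (norm_nonneg F₀)
        _ = ‖F₀‖ * (A + M) * (e * n) := by ring
    exact mul_le_mul_of_nonneg_right h1 (le_of_lt (mul_pos hapos hdpos))
  have hWpos : (0:ℝ) < ‖W‖ := lt_of_lt_of_le (by positivity) hWlow
  have hB2 : ‖ε * (t : ℂ) * u / (a * (F₀ + 1) * W)‖
      ≤ |t| * 2 / d ^ 2 * (e * n) / A := by
    rw [norm_div, norm_mul, norm_mul, norm_mul, norm_mul, hεnorm,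
      Complex.norm_real, Real.norm_eq_abs, ← hA_def, ← hd_def, ← hn_def,
      show |t| * 2 / d ^ 2 * (e * n) / A = |t| * 2 * (e * n) / (A * d ^ 2) by ring,
      div_le_div_iff₀ (mul_pos (mul_pos hapos hdpos) hWpos) (by positivity)]
    calc e * |t| * n * (A * d ^ 2) = e * |t| * n * (A * d) * d := by ring
      _ ≤ e * |t| * n * (A * d) * (2 * ‖W‖) := by
          refine mul_le_mul_of_nonneg_left (by linarith) ?_
          have : 0 ≤ A * d := le_of_lt (mul_pos hapos hdpos)
          positivity
      _ = |t| * 2 * (e * n) * (A * d * ‖W‖) := by ring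
  have hB3 : ‖R / a‖ ≤ M * n ^ 2 / A := by
    rw [norm_div, ← hA_def, div_le_div_iff₀ hapos hapos]
    nlinarith [mul_le_mul_of_nonneg_right hRbound hapos.le]
  calc ‖-(ε * F₀ * (a * u + R)) / (a * (F₀ + 1)) - ε * (t : ℂ) * u / (a * (F₀ + 1) * W)
        - R / a‖
      ≤ ‖-(ε * F₀ * (a * u + R)) / (a * (F₀ + 1)) - ε * (t : ℂ) * u / (a * (F₀ + 1) * W)‖
        + ‖R / a‖ := norm_sub_le _ _
    _ ≤ ‖-(ε * F₀ * (a * u + R)) / (a * (F₀ + 1))‖ + ‖ε * (t : ℂ) * u / (a * (F₀ + 1) * W)‖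
        + ‖R / a‖ := by
          have := norm_sub_le (-(ε * F₀ * (a * u + R)) / (a * (F₀ + 1))) (ε * (t : ℂ) * u / (a * (F₀ + 1) * W))
          linarith
    _ ≤ ‖F₀‖ * (A + M) / d * (e * n) / A + |t| * 2 / d ^ 2 * (e * n) / A
        + M * n ^ 2 / A := by linarith
    _ = (‖F₀‖ * (A + M) / d * (e * n) + |t| * 2 / d ^ 2 * (e * n) + M * n ^ 2) / A := by
        ring
    _ ≤ (‖F₀‖ * (A + M) / d + |t| * 2 / d ^ 2 + M + 1) * (e * n + n ^ 2) / A := by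
        have hA0 : 0 ≤ A := hapos.le
        have hC1 : 0 ≤ ‖F₀‖ * (A + M) / d :=
          div_nonneg (mul_nonneg (norm_nonneg _) (by linarith)) hdpos.le
        have hC2 : 0 ≤ |t| * 2 / d ^ 2 :=
          div_nonneg (by positivity) (by positivity)
        have hen : 0 ≤ e * n := mul_nonneg he0 hn0
        have hn2 : 0 ≤ n ^ 2 := sq_nonneg n
        rw [div_le_div_iff₀ hapos hapos]
        refine mul_le_mul_of_nonneg_right ?_ hapos.le
        nlinarith [mul_nonneg hC1 hn2, mul_nonneg hC2 hn2, mul_nonneg hM.le hen, hen, hn2]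
    _ = (‖F₀‖ * (A + M) / d + |t| * 2 / d ^ 2 + M + 1) / A * (e * n + n ^ 2) := by ring
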